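/- The duality map D carries the diagonal line {x = y} into the unit circle: for every x ∈ ℝ with x(2x² − 2x + 1) ≠ 0, the point (u,v) = D(x,x) satisfies u² + v² = 1. -/

import Mathlib

/-!
After cancelling the common factor `x`, `D (x, x)` is Euclid's rational parametrisation
`(2mn, m² - n²) / (m² + n²)` of the unit circle at `(m, n) = (x, 1 - x)`.
-/

/-- Denominator whose nonvanishing defines the domain of the duality map `D`. -/
noncomputable def dDen (x y : ℝ) : ℝ := x * (x ^ 2 - 2 * x + y ^ 2 + 1)

/-- The duality map `D`. -/
noncomputable def D (p : ℝ × ℝ) : ℝ × ℝ :=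
  (-(p.2 * (p.1 ^ 2 - p.1 + p.2 ^ 2 - p.2)) / dDen p.1 p.2,
    (p.2 * (p.1 + p.2 - 1)) / dDen p.1 p.2)

theorem euclid_parametrization_sq_add_sq {K : Type*} [Field K] {m n : K}
    (h : m ^ 2 + n ^ 2 ≠ 0) :
    (2 * m * n / (m ^ 2 + n ^ 2)) ^ 2 + ((m ^ 2 - n ^ 2) / (m ^ 2 + n ^ 2)) ^ 2 = 1 := by
  rw [div_pow, div_pow, ← add_div, div_eq_one_iff_eq (pow_ne_zero 2 h)]
  ring

theorem D_apply_diag {x : ℝ} (hx : x ≠ 0) :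
    D (x, x) = (2 * x * (1 - x) / (x ^ 2 + (1 - x) ^ 2),
      (x ^ 2 - (1 - x) ^ 2) / (x ^ 2 + (1 - x) ^ 2)) := by
  have hq : x ^ 2 + (1 - x) ^ 2 ≠ 0 := by positivity
  have hden : dDen x x = x * (x ^ 2 + (1 - x) ^ 2) := by unfold dDen; ring
  simp only [D, hden]
  ext <;> field_simp <;> ring

/-- The duality map `D` carries the diagonal line `x = y` into the unit circle. -/
theorem D_diagonal_to_unit_circle (x : ℝ) (h : x * (2 * x ^ 2 - 2 * x + 1) ≠ 0) :
    (D (x, x)).1 ^ 2 + (D (x, x)).2 ^ 2 = 1 := by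
  have hx : x ≠ 0 := left_ne_zero_of_mul h
  rw [D_apply_diag hx]
  exact euclid_parametrization_sq_add_sq (by positivity)
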